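/- arXiv:1906.05944 — 4 statements merged into one kernel-verified Lean document; each statement's English description precedes it below -/
import Mathlib

section
/- Let k be a bounded kernel and let P^n and Q^m be empirical measures of n points x_1,...,x_n and m points y_1,...,y_m respectively. Then |MMD_{U,U}^2(P^n || Q^m) - MMD^2(P^n || Q^m)| ≤ 2(1/m + 1/n) * sup_{x∈X} k(x,x), where MMD_{U,U}^2 replaces both diagonal-inclusive double sums by their U-statistic (off-diagonal) versions. -/
open Finset

/-!
Only the within-sample terms differ, and for each sample the U-statistic minus the V-statistic
equals `(U - D/N)/N`, where `D/N` is the mean of the diagonal entries `k(zᵢ, zᵢ)`: both `U` and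
`D/N` are averages of values bounded by `B` in absolute value, so the difference is at most `2B/N`.
-/

section UStatistic

variable {ι : Type*} [Fintype ι]

theorem abs_sum_div_card_le [Nonempty ι] {g : ι → ℝ} {B : ℝ} (hg : ∀ i, |g i| ≤ B) :
    |(∑ i, g i) / Fintype.card ι| ≤ B := by
  rw [abs_div, Nat.abs_cast, div_le_iff₀ (by exact_mod_cast Fintype.card_pos), mul_comm]
  calc |∑ i, g i| ≤ ∑ i, |g i| := abs_sum_le_sum_abs _ _
    _ ≤ _ := by simpa using sum_le_card_nsmul univ _ B fun i _ => hg i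

/-- With `f i j = k (zᵢ, zⱼ)`, `vStat f` and `uStat f` are the within-sample terms of `MMD²` and
`MMD_{U,U}²`. -/
noncomputable def vStat (f : ι → ι → ℝ) : ℝ :=
  1 / (Fintype.card ι : ℝ) ^ 2 * ∑ i, ∑ j, f i j

variable [DecidableEq ι]

noncomputable def uStat (f : ι → ι → ℝ) : ℝ :=
  1 / ((Fintype.card ι : ℝ) * ((Fintype.card ι : ℝ) - 1)) *
    ∑ i, ∑ j, if i ≠ j then f i j else 0

theorem sum_ite_ne_eq_sum_erase {M : Type*} [AddCommMonoid M] (i : ι) (g : ι → M) :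
    ∑ j, (if i ≠ j then g j else 0) = ∑ j ∈ univ.erase i, g j := by
  simp [sum_ite, filter_ne]

theorem sum_sum_eq_sum_offDiag_add_sum_diag {M : Type*} [AddCommMonoid M] (f : ι → ι → M) :
    ∑ i, ∑ j, f i j = ∑ i, ∑ j, (if i ≠ j then f i j else 0) + ∑ i, f i i := by
  rw [← sum_add_distrib]
  refine sum_congr rfl fun i _ => ?_
  rw [sum_ite_ne_eq_sum_erase, sum_erase_add _ _ (mem_univ i)]

theorem abs_sum_offDiag_le {f : ι → ι → ℝ} {B : ℝ} (hf : ∀ i j, |f i j| ≤ B) :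
    |∑ i, ∑ j, if i ≠ j then f i j else 0|
      ≤ (Fintype.card ι : ℝ) * ((Fintype.card ι : ℝ) - 1) * B := by
  have hrow : ∀ i, |∑ j, if i ≠ j then f i j else 0| ≤ ((Fintype.card ι : ℝ) - 1) * B := by
    intro i
    rw [sum_ite_ne_eq_sum_erase]
    calc |∑ j ∈ univ.erase i, f i j| ≤ ∑ j ∈ univ.erase i, |f i j| := abs_sum_le_sum_abs _ _
      _ ≤ #(univ.erase i) • B := sum_le_card_nsmul _ _ _ fun j _ => hf i j
      _ = ((Fintype.card ι : ℝ) - 1) * B := by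
        rw [card_erase_of_mem (mem_univ i), nsmul_eq_mul, card_univ,
          Nat.cast_pred (Fintype.card_pos_iff.2 ⟨i⟩)]
  calc _ ≤ ∑ i, |∑ j, if i ≠ j then f i j else 0| := abs_sum_le_sum_abs _ _
    _ ≤ ∑ _i : ι, ((Fintype.card ι : ℝ) - 1) * B := sum_le_sum fun i _ => hrow i
    _ = _ := by rw [sum_const, card_univ, nsmul_eq_mul, mul_assoc]

theorem uStat_sub_vStat (hι : 2 ≤ Fintype.card ι) (f : ι → ι → ℝ) :
    uStat f - vStat f = (uStat f - (∑ i, f i i) / Fintype.card ι) / Fintype.card ι := by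
  have hN : (2 : ℝ) ≤ Fintype.card ι := by exact_mod_cast hι
  have hN0 : (Fintype.card ι : ℝ) ≠ 0 := by positivity
  have hN1 : (Fintype.card ι : ℝ) - 1 ≠ 0 := by linarith
  rw [uStat, vStat, sum_sum_eq_sum_offDiag_add_sum_diag f]
  field_simp
  ring

theorem abs_uStat_le (hι : 2 ≤ Fintype.card ι) {f : ι → ι → ℝ} {B : ℝ}
    (hf : ∀ i j, |f i j| ≤ B) : |uStat f| ≤ B := by
  have hN : (2 : ℝ) ≤ Fintype.card ι := by exact_mod_cast hι
  have hpos : 0 < (Fintype.card ι : ℝ) * ((Fintype.card ι : ℝ) - 1) := by nlinarith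
  rw [uStat, abs_mul, abs_of_pos (one_div_pos.2 hpos), one_div_mul_eq_div, div_le_iff₀ hpos,
    mul_comm]
  exact abs_sum_offDiag_le hf

theorem abs_uStat_sub_vStat_le (hι : 2 ≤ Fintype.card ι) {f : ι → ι → ℝ} {B : ℝ}
    (hf : ∀ i j, |f i j| ≤ B) : |uStat f - vStat f| ≤ 2 / Fintype.card ι * B := by
  have : Nonempty ι := Fintype.card_pos_iff.1 (by omega)
  rw [uStat_sub_vStat hι, abs_div, Nat.abs_cast, div_mul_eq_mul_div, two_mul]
  gcongr
  exact (abs_sub _ _).trans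
    (add_le_add (abs_uStat_le hι hf) (abs_sum_div_card_le fun i => hf i i))

end UStatistic

theorem mmdUU_sub_mmd_bound_general {X : Type*} (k : X → X → ℝ) (B : ℝ)
    (hkB : ∀ x y : X, |k x y| ≤ B)
    (n m : ℕ) (hn : 2 ≤ n) (hm : 2 ≤ m)
    (x : Fin n → X) (y : Fin m → X)
    (MMD2 MMD2UU : ℝ)
    (hMMD2 : MMD2 =
        (1 / ((n : ℝ)^2)) * ∑ i : Fin n, ∑ j : Fin n, k (x i) (x j)
      - (2 / ((n : ℝ) * (m : ℝ))) * ∑ i : Fin n, ∑ j : Fin m, k (x i) (y j)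
      + (1 / ((m : ℝ)^2)) * ∑ i : Fin m, ∑ j : Fin m, k (y i) (y j))
    (hMMD2UU : MMD2UU =
        (1 / ((n : ℝ) * ((n : ℝ) - 1))) * ∑ i : Fin n, ∑ j : Fin n,
          (if i ≠ j then k (x i) (x j) else 0)
      - (2 / ((n : ℝ) * (m : ℝ))) * ∑ i : Fin n, ∑ j : Fin m, k (x i) (y j)
      + (1 / ((m : ℝ) * ((m : ℝ) - 1))) * ∑ i : Fin m, ∑ j : Fin m,
          (if i ≠ j then k (y i) (y j) else 0)) :
    |MMD2UU - MMD2| ≤ 2 * (1 / (m : ℝ) + 1 / (n : ℝ)) * B := by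
  set kx : Fin n → Fin n → ℝ := fun i j => k (x i) (x j)
  set ky : Fin m → Fin m → ℝ := fun i j => k (y i) (y j)
  have hsplit : MMD2UU - MMD2 = (uStat kx - vStat kx) + (uStat ky - vStat ky) := by
    simp only [uStat, vStat, Fintype.card_fin, hMMD2, hMMD2UU]
    ring
  have hx : |uStat kx - vStat kx| ≤ 2 / n * B := by
    simpa only [Fintype.card_fin] using
      abs_uStat_sub_vStat_le (by simpa only [Fintype.card_fin]) fun i j => hkB (x i) (x j)
  have hy : |uStat ky - vStat ky| ≤ 2 / m * B := by
    simpa only [Fintype.card_fin] using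
      abs_uStat_sub_vStat_le (by simpa only [Fintype.card_fin]) fun i j => hkB (y i) (y j)
  calc |MMD2UU - MMD2| ≤ |uStat kx - vStat kx| + |uStat ky - vStat ky| := hsplit ▸ abs_add_le _ _
    _ ≤ 2 / n * B + 2 / m * B := add_le_add hx hy
    _ = 2 * (1 / (m : ℝ) + 1 / (n : ℝ)) * B := by ring

/-- The doubly U-statistic approximation `MMD_{U,U}²(Pⁿ‖Qᵐ)` differs from the
plug-in `MMD²(Pⁿ‖Qᵐ)` by at most `2(1/m + 1/n)·sup_x k(x,x)` for a bounded
kernel, where `Pⁿ` and `Qᵐ` are the empirical measures of `x₁,…,xₙ` and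
`y₁,…,yₘ`. -/
theorem mmdUU_sub_mmd_bound {X : Type*} (k : X → X → ℝ) (B : ℝ)
    (hkB : ∀ x y : X, |k x y| ≤ B) (hBdiag : ∀ x : X, k x x ≤ B)
    (n m : ℕ) (hn : 2 ≤ n) (hm : 2 ≤ m)
    (x : Fin n → X) (y : Fin m → X)
    (MMD2 MMD2UU : ℝ)
    (hMMD2 : MMD2 =
        (1 / ((n : ℝ)^2)) * ∑ i : Fin n, ∑ j : Fin n, k (x i) (x j)
      - (2 / ((n : ℝ) * (m : ℝ))) * ∑ i : Fin n, ∑ j : Fin m, k (x i) (y j)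
      + (1 / ((m : ℝ)^2)) * ∑ i : Fin m, ∑ j : Fin m, k (y i) (y j))
    (hMMD2UU : MMD2UU =
        (1 / ((n : ℝ) * ((n : ℝ) - 1))) * ∑ i : Fin n, ∑ j : Fin n,
          (if i ≠ j then k (x i) (x j) else 0)
      - (2 / ((n : ℝ) * (m : ℝ))) * ∑ i : Fin n, ∑ j : Fin m, k (x i) (y j)
      + (1 / ((m : ℝ) * ((m : ℝ) - 1))) * ∑ i : Fin m, ∑ j : Fin m,
          (if i ≠ j then k (y i) (y j) else 0)) :
    |MMD2UU - MMD2| ≤ 2 * (1 / (m : ℝ) + 1 / (n : ℝ)) * B :=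
  mmdUU_sub_mmd_bound_general k B hkB n m hn hm x y MMD2 MMD2UU hMMD2 hMMD2UU
end

section
/- For the d-dimensional isotropic Gaussian location model P_θ = N(θ, σ² I_d) with Gaussian kernel k(x,y) = φ(x; y, l² I_d) (the density of N(y, l² I_d) evaluated at x), the MMD information metric tensor at any θ equals g(θ) = (2π)^{-d/2} (l² + 2σ²)^{-d/2 - 1} I_{d×d}. -/
/-! The mixed derivative of the kernel is `(δᵢⱼ / l² - wᵢ wⱼ / l⁴) k(x, y)` with `w = x - y`, and
the kernel as well as this prefactor factor over the coordinates, so the double integral against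
the product measure splits into one-dimensional double integrals `∫∫ p(a - b) φ_{l²}(a - b)` with
`a, b ~ N(0, σ²)` independent. There `a - b ~ N(0, 2σ²)`, and the product of the centred densities
`φ_{2σ²} φ_{l²}` is `φ_{2σ² + l²}(0)` times a centred Gaussian density, so each factor is
`φ_{2σ² + l²}(0)` times a moment of degree at most two of a centred Gaussian. The first moment
vanishes, which kills the off-diagonal entries; on the diagonal the second moment turns
`1 / l² - t² / l⁴` into `(l² + 2σ²)⁻¹`. -/

open MeasureTheory Finset ProbabilityTheory

/-- The Gaussian (RBF, density-normalised) kernel on `ℝᵈ` with lengthscale `l`: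
`k(x,y) = φ(x; y, l² I_d)`. -/
noncomputable def gaussKernel (d : ℕ) (l : ℝ) (x y : Fin d → ℝ) : ℝ :=
  (2 * Real.pi * l ^ 2) ^ (-(d : ℝ) / 2)
    * Real.exp (-(∑ i, (x i - y i) ^ 2) / (2 * l ^ 2))

/-- Mixed second partial derivative `∂_{x_i}∂_{y_j} k(x, y)` of the kernel. -/
noncomputable def gaussKernelMixedDeriv (d : ℕ) (l : ℝ) (x y : Fin d → ℝ)
    (i j : Fin d) : ℝ :=
  deriv (fun t =>
    deriv (fun s => gaussKernel d l (Function.update x i t) (Function.update y j s))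
      (y j)) (x i)

open Real Function
open scoped NNReal

lemma inv_sqrt_pow {a : ℝ} (ha : 0 ≤ a) (n : ℕ) : (√a)⁻¹ ^ n = a ^ (-(n : ℝ) / 2) := by
  rw [sqrt_eq_rpow, ← rpow_neg ha, ← rpow_natCast, ← rpow_mul ha]
  ring_nf

section GaussianIntegrals

variable {v w : ℝ≥0}

lemma integral_integral_sub_gaussianReal {m₁ m₂ : ℝ} {v₁ v₂ : ℝ≥0} {g : ℝ → ℝ}
    (hg : Integrable g (gaussianReal (m₁ - m₂) (v₁ + v₂))) :
    ∫ b, ∫ a, g (a - b) ∂gaussianReal m₁ v₁ ∂gaussianReal m₂ v₂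
      = ∫ t, g t ∂gaussianReal (m₁ - m₂) (v₁ + v₂) := by
  have hneg : gaussianReal m₂ v₂ = (gaussianReal (-m₂) v₂).map (MeasurableEquiv.neg ℝ) := by
    simp [gaussianReal_map_neg]
  have hconv : gaussianReal (m₁ - m₂) (v₁ + v₂) = gaussianReal (-m₂) v₂ ∗ gaussianReal m₁ v₁ := by
    rw [gaussianReal_conv_gaussianReal, neg_add_eq_sub, add_comm v₂]
  rw [hneg, integral_map_equiv, hconv, integral_conv (hconv ▸ hg)]
  simp [sub_eq_neg_add]

lemma integral_sq_gaussianReal : ∫ t, t ^ 2 ∂gaussianReal 0 v = v := by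
  rw [← variance_fun_id_gaussianReal (μ := 0) (v := v),
    variance_of_integral_eq_zero aemeasurable_id' integral_id_gaussianReal]

lemma gaussianPDFReal_mul_gaussianPDFReal (hv : v ≠ 0) (hw : w ≠ 0) (t : ℝ) :
    gaussianPDFReal 0 v t * gaussianPDFReal 0 w t
      = gaussianPDFReal 0 (v + w) 0 * gaussianPDFReal 0 (v * w / (v + w)) t := by
  have hv' : (0 : ℝ) < v := by positivity
  have hw' : (0 : ℝ) < w := by positivity
  have hsqrt : (√(2 * π * v))⁻¹ * (√(2 * π * w))⁻¹
      = (√(2 * π * (v + w)))⁻¹ * (√(2 * π * (v * w / (v + w))))⁻¹ := by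
    rw [← mul_inv, ← mul_inv, ← sqrt_mul (by positivity), ← sqrt_mul (by positivity)]
    field_simp
  have hexp : -t ^ 2 / (2 * v) + -t ^ 2 / (2 * w)
      = -0 ^ 2 / (2 * (v + w)) + -t ^ 2 / (2 * (v * w / (v + w))) := by
    field_simp
    ring
  simp only [gaussianPDFReal, NNReal.coe_add, NNReal.coe_div, NNReal.coe_mul, sub_zero]
  calc _ = (√(2 * π * v))⁻¹ * (√(2 * π * w))⁻¹ * rexp (-t ^ 2 / (2 * v) + -t ^ 2 / (2 * w)) := by
        rw [Real.exp_add]; ring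
    _ = _ := by rw [hsqrt, hexp, Real.exp_add]; ring

lemma integral_gaussianReal_mul_gaussianPDFReal (hv : v ≠ 0) (hw : w ≠ 0) (f : ℝ → ℝ) :
    ∫ t, f t * gaussianPDFReal 0 w t ∂gaussianReal 0 v
      = gaussianPDFReal 0 (v + w) 0 * ∫ t, f t ∂gaussianReal 0 (v * w / (v + w)) := by
  have hvw : v * w / (v + w) ≠ 0 := by positivity
  rw [integral_gaussianReal_eq_integral_smul hv, integral_gaussianReal_eq_integral_smul hvw,
    ← integral_const_mul]
  congr 1 with t
  simp only [smul_eq_mul]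
  rw [mul_left_comm, gaussianPDFReal_mul_gaussianPDFReal hv hw]
  ring

lemma integrable_gaussianReal_iff (hv : v ≠ 0) {f : ℝ → ℝ} :
    Integrable f (gaussianReal 0 v) ↔ Integrable (fun t => gaussianPDFReal 0 v t * f t) := by
  rw [gaussianReal_of_var_ne_zero _ hv, integrable_withDensity_iff_integrable_smul'
    (measurable_gaussianPDF _ _) (.of_forall fun _ => gaussianPDF_lt_top)]
  simp [toReal_gaussianPDF]

lemma MeasureTheory.Integrable.mul_gaussianPDFReal (hv : v ≠ 0) (hw : w ≠ 0) {f : ℝ → ℝ}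
    (hf : Integrable f (gaussianReal 0 (v * w / (v + w)))) :
    Integrable (fun t => f t * gaussianPDFReal 0 w t) (gaussianReal 0 v) := by
  have hvw : v * w / (v + w) ≠ 0 := by positivity
  rw [integrable_gaussianReal_iff hvw] at hf
  rw [integrable_gaussianReal_iff hv]
  refine (hf.const_mul (gaussianPDFReal 0 (v + w) 0)).congr (.of_forall fun t => ?_)
  simp only
  rw [← mul_assoc, ← gaussianPDFReal_mul_gaussianPDFReal hv hw]
  ring

lemma integral_integral_mul_gaussianPDFReal_sub (hv : v ≠ 0) (hw : w ≠ 0) {f : ℝ → ℝ}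
    (hf : Integrable f (gaussianReal 0 ((v + v) * w / (v + v + w)))) :
    ∫ b, ∫ a, f (a - b) * gaussianPDFReal 0 w (a - b) ∂gaussianReal 0 v ∂gaussianReal 0 v
      = gaussianPDFReal 0 (v + v + w) 0 * ∫ t, f t ∂gaussianReal 0 ((v + v) * w / (v + v + w)) := by
  have hvv : v + v ≠ 0 := by positivity
  have hconv := integral_integral_sub_gaussianReal (m₁ := 0) (m₂ := 0) (v₁ := v) (v₂ := v)
    (g := fun t => f t * gaussianPDFReal 0 w t)
  rw [sub_self] at hconv
  rw [hconv (hf.mul_gaussianPDFReal hvv hw), integral_gaussianReal_mul_gaussianPDFReal hvv hw]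

lemma integral_integral_gaussianPDFReal_sub (hv : v ≠ 0) (hw : w ≠ 0) :
    ∫ b, ∫ a, gaussianPDFReal 0 w (a - b) ∂gaussianReal 0 v ∂gaussianReal 0 v
      = gaussianPDFReal 0 (v + v + w) 0 := by
  simpa using integral_integral_mul_gaussianPDFReal_sub hv hw (integrable_const (1 : ℝ))

lemma integral_integral_sub_mul_gaussianPDFReal_sub (hv : v ≠ 0) (hw : w ≠ 0) :
    ∫ b, ∫ a, (a - b) * gaussianPDFReal 0 w (a - b) ∂gaussianReal 0 v ∂gaussianReal 0 v = 0 := by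
  rw [integral_integral_mul_gaussianPDFReal_sub hv hw (f := fun t => t)
    ((memLp_id_gaussianReal 1).integrable le_rfl)]
  simp

lemma integral_integral_one_div_sub_sq_div_mul_gaussianPDFReal_sub (hv : v ≠ 0) (hw : w ≠ 0) :
    ∫ b, ∫ a, (1 / w - (a - b) ^ 2 / w ^ 2) * gaussianPDFReal 0 w (a - b)
        ∂gaussianReal 0 v ∂gaussianReal 0 v
      = gaussianPDFReal 0 (v + v + w) 0 * ((v + v + w : ℝ≥0) : ℝ)⁻¹ := by
  have hsq : Integrable (fun t : ℝ => t ^ 2) (gaussianReal 0 ((v + v) * w / (v + v + w))) :=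
    (memLp_id_gaussianReal 2).integrable_sq
  rw [integral_integral_mul_gaussianPDFReal_sub hv hw (f := fun t => 1 / w - t ^ 2 / w ^ 2)
    ((integrable_const _).sub (hsq.div_const _)), integral_sub (integrable_const _) (hsq.div_const _),
    integral_const, probReal_univ, one_smul, integral_div, integral_sq_gaussianReal]
  have hv' : (0 : ℝ) < v := by positivity
  have hw' : (0 : ℝ) < w := by positivity
  congr 1
  push_cast
  field_simp
  ring

lemma gaussianPDFReal_zero_pow (n : ℕ) :
    gaussianPDFReal 0 v 0 ^ n = (2 * π * v) ^ (-(n : ℝ) / 2) := by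
  simp only [gaussianPDFReal, sub_self, ne_eq, OfNat.ofNat_ne_zero, not_false_eq_true, zero_pow,
    neg_zero, zero_div, exp_zero, mul_one]
  exact inv_sqrt_pow (by positivity) n

end GaussianIntegrals

lemma integral_integral_pi_prod {ι α β : Type*} [Fintype ι] [MeasurableSpace α]
    [MeasurableSpace β] (μ : Measure α) (ν : Measure β) [SigmaFinite μ] [SigmaFinite ν]
    (f : ι → α → β → ℝ) :
    ∫ y, ∫ x, ∏ k, f k (x k) (y k) ∂Measure.pi (fun _ => μ) ∂Measure.pi (fun _ => ν)
      = ∏ k, ∫ b, ∫ a, f k a b ∂μ ∂ν := by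
  calc _ = ∫ y, ∏ k, ∫ a, f k a (y k) ∂μ ∂Measure.pi (fun _ => ν) :=
        integral_congr_ae (.of_forall fun y => integral_fintype_prod_eq_prod (fun k a => f k a (y k)))
    _ = _ := integral_fintype_prod_eq_prod (fun k b => ∫ a, f k a b ∂μ)

section Kernel

variable {d : ℕ} {l : ℝ}

lemma gaussKernel_comm (x y : Fin d → ℝ) : gaussKernel d l x y = gaussKernel d l y x := by
  simp only [gaussKernel, ← neg_sub (x _), neg_sq]

lemma hasDerivAt_sum_sq_update (z w : Fin d → ℝ) (i : Fin d) (t : ℝ) :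
    HasDerivAt (fun t => ∑ k, (update z i t k - w k) ^ 2) (2 * (t - w i)) t := by
  have hsplit : (fun t => ∑ k, (update z i t k - w k) ^ 2)
      = fun t => (t - w i) ^ 2 + ∑ k ∈ univ.erase i, (z k - w k) ^ 2 := by
    funext t
    rw [← add_sum_erase _ _ (mem_univ i), update_self]
    congr 1
    exact sum_congr rfl fun k hk => by rw [update_of_ne (ne_of_mem_erase hk)]
  rw [hsplit]
  exact ((((hasDerivAt_id' t).sub_const (w i)).fun_pow 2).add_const _).congr_deriv (by ring)

lemma hasDerivAt_gaussKernel_update_left (hl : l ≠ 0) (x y : Fin d → ℝ) (i : Fin d) (t : ℝ) :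
    HasDerivAt (fun t => gaussKernel d l (update x i t) y)
      (-(t - y i) / l ^ 2 * gaussKernel d l (update x i t) y) t := by
  have h := (((hasDerivAt_sum_sq_update x y i t).fun_neg.div_const (2 * l ^ 2)).exp).const_mul
    ((2 * π * l ^ 2) ^ (-(d : ℝ) / 2))
  refine h.congr_deriv ?_
  simp only [gaussKernel]
  field_simp

lemma hasDerivAt_gaussKernel_update_right (hl : l ≠ 0) (x y : Fin d → ℝ) (j : Fin d) (s : ℝ) :
    HasDerivAt (fun s => gaussKernel d l x (update y j s))
      ((x j - s) / l ^ 2 * gaussKernel d l x (update y j s)) s := by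
  simp only [gaussKernel_comm x]
  convert hasDerivAt_gaussKernel_update_left hl y x j s using 2
  ring

lemma gaussKernelMixedDeriv_eq (hl : l ≠ 0) (x y : Fin d → ℝ) (i j : Fin d) :
    gaussKernelMixedDeriv d l x y i j
      = ((if i = j then 1 else 0) / l ^ 2 - (x i - y i) * (x j - y j) / (l ^ 2) ^ 2)
        * gaussKernel d l x y := by
  have hinner : (fun t => deriv
      (fun s => gaussKernel d l (update x i t) (update y j s)) (y j))
      = fun t => (update x i t j - y j) / l ^ 2 * gaussKernel d l (update x i t) y := by
    funext t
    simpa using (hasDerivAt_gaussKernel_update_right hl (update x i t) y j (y j)).deriv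
  have hfactor : HasDerivAt (fun t => (update x i t j - y j) / l ^ 2)
      ((if i = j then 1 else 0) / l ^ 2) (x i) := by
    by_cases hij : i = j
    · subst hij
      simpa using ((hasDerivAt_id (x i)).sub_const (y i)).div_const (l ^ 2)
    · simpa [update_of_ne (Ne.symm hij), hij] using hasDerivAt_const (x i) ((x j - y j) / l ^ 2)
  have hkernel := hasDerivAt_gaussKernel_update_left hl x y i (x i)
  rw [update_eq_self] at hkernel
  rw [gaussKernelMixedDeriv, hinner, (hfactor.fun_mul hkernel).deriv, update_eq_self]
  field_simp
  ring

lemma gaussKernelMixedDeriv_add_right (hl : l ≠ 0) (x y θ : Fin d → ℝ) (i j : Fin d) :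
    gaussKernelMixedDeriv d l (x + θ) (y + θ) i j = gaussKernelMixedDeriv d l x y i j := by
  simp only [gaussKernelMixedDeriv_eq hl, gaussKernel, Pi.add_apply, add_sub_add_right_eq_sub]

lemma gaussKernel_eq_prod (x y : Fin d → ℝ) :
    gaussKernel d l x y = ∏ k, gaussianPDFReal 0 (l ^ 2).toNNReal (x k - y k) := by
  simp only [gaussianPDFReal, Real.coe_toNNReal _ (sq_nonneg l), sub_zero, prod_mul_distrib,
    prod_const, card_univ, Fintype.card_fin, ← exp_sum, neg_div, sum_neg_distrib, ← sum_div]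
  rw [inv_sqrt_pow (by positivity), gaussKernel, neg_div, neg_div]

lemma gaussKernelMixedDeriv_self_eq_prod (hl : l ≠ 0) (x y : Fin d → ℝ) (i : Fin d) :
    gaussKernelMixedDeriv d l x y i i
      = ∏ k, (if k = i then 1 / l ^ 2 - (x k - y k) ^ 2 / (l ^ 2) ^ 2 else 1)
          * gaussianPDFReal 0 (l ^ 2).toNNReal (x k - y k) := by
  rw [gaussKernelMixedDeriv_eq hl, gaussKernel_eq_prod, prod_mul_distrib, prod_ite_eq']
  simp [sq]

lemma gaussKernelMixedDeriv_eq_prod_of_ne (hl : l ≠ 0) (x y : Fin d → ℝ) {i j : Fin d}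
    (hij : i ≠ j) :
    gaussKernelMixedDeriv d l x y i j
      = -(1 / (l ^ 2) ^ 2) * ∏ k, (if k = i then x k - y k else 1)
          * (if k = j then x k - y k else 1) * gaussianPDFReal 0 (l ^ 2).toNNReal (x k - y k) := by
  rw [gaussKernelMixedDeriv_eq hl, gaussKernel_eq_prod, prod_mul_distrib, prod_mul_distrib,
    prod_ite_eq', prod_ite_eq']
  simp only [mem_univ, if_true, hij, if_false]
  ring

end Kernel

section MetricTensor

variable {d : ℕ} {l : ℝ} {v : ℝ≥0}

lemma integral_integral_gaussKernelMixedDeriv_self (hv : v ≠ 0) (hl : l ≠ 0) (i : Fin d) :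
    ∫ y, ∫ x, gaussKernelMixedDeriv d l x y i i
        ∂Measure.pi (fun _ => gaussianReal 0 v) ∂Measure.pi (fun _ => gaussianReal 0 v)
      = gaussianPDFReal 0 (v + v + (l ^ 2).toNNReal) 0 ^ d
          * ((v + v + (l ^ 2).toNNReal : ℝ≥0) : ℝ)⁻¹ := by
  have hw : (l ^ 2).toNNReal ≠ 0 := by simp [hl]
  have hfactor : ∀ k, ∫ b, ∫ a, (if k = i then 1 / l ^ 2 - (a - b) ^ 2 / (l ^ 2) ^ 2 else 1)
        * gaussianPDFReal 0 (l ^ 2).toNNReal (a - b) ∂gaussianReal 0 v ∂gaussianReal 0 v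
      = gaussianPDFReal 0 (v + v + (l ^ 2).toNNReal) 0
        * if k = i then ((v + v + (l ^ 2).toNNReal : ℝ≥0) : ℝ)⁻¹ else 1 := by
    intro k
    split_ifs
    · have h := integral_integral_one_div_sub_sq_div_mul_gaussianPDFReal_sub hv hw
      rwa [Real.coe_toNNReal _ (sq_nonneg l)] at h
    · simpa using integral_integral_gaussianPDFReal_sub hv hw
  simp_rw [gaussKernelMixedDeriv_self_eq_prod hl]
  rw [integral_integral_pi_prod _ _ (fun k a b =>
      (if k = i then 1 / l ^ 2 - (a - b) ^ 2 / (l ^ 2) ^ 2 else 1)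
        * gaussianPDFReal 0 (l ^ 2).toNNReal (a - b)),
    prod_congr rfl fun k _ => hfactor k, prod_mul_distrib, prod_const, prod_ite_eq',
    card_univ, Fintype.card_fin, if_pos (mem_univ i)]

lemma integral_integral_gaussKernelMixedDeriv_of_ne (hv : v ≠ 0) (hl : l ≠ 0) {i j : Fin d}
    (hij : i ≠ j) :
    ∫ y, ∫ x, gaussKernelMixedDeriv d l x y i j
        ∂Measure.pi (fun _ => gaussianReal 0 v) ∂Measure.pi (fun _ => gaussianReal 0 v) = 0 := by
  have hw : (l ^ 2).toNNReal ≠ 0 := by simp [hl]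
  simp_rw [gaussKernelMixedDeriv_eq_prod_of_ne hl _ _ hij, integral_const_mul]
  rw [integral_integral_pi_prod _ _ (fun k a b => (if k = i then a - b else 1)
      * (if k = j then a - b else 1) * gaussianPDFReal 0 (l ^ 2).toNNReal (a - b)),
    prod_eq_zero (mem_univ i), mul_zero]
  simpa [hij] using integral_integral_sub_mul_gaussianPDFReal_sub hv hw

end MetricTensor

/-- For the Gaussian location model `P_θ = N(θ, σ² I_d)` with generator
`G_θ(u) = u + θ`, base measure `U = N(0, σ² I_d)` (so `∇_θ G_θ = I`), and
Gaussian kernel of lengthscale `l`, the MMD information metric tensor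
`g(θ)_{ij} = ∫∫ (∂_{x_i}∂_{y_j} k)(u+θ, v+θ) dU(u) dU(v)` equals
`(2π)^{-d/2} (l² + 2σ²)^{-d/2-1} I_{d×d}` at every `θ`. -/
theorem gaussian_location_metric_tensor (d : ℕ) (σ l : ℝ)
    (hσ : 0 < σ) (hl : 0 < l) (θ : Fin d → ℝ) (i j : Fin d) :
    (∫ v, ∫ u, gaussKernelMixedDeriv d l (u + θ) (v + θ) i j
        ∂(Measure.pi fun _ : Fin d => gaussianReal 0 (Real.toNNReal (σ ^ 2)))
        ∂(Measure.pi fun _ : Fin d => gaussianReal 0 (Real.toNNReal (σ ^ 2))))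
      = (2 * Real.pi) ^ (-(d : ℝ) / 2) * (l ^ 2 + 2 * σ ^ 2) ^ (-(d : ℝ) / 2 - 1)
          * (if i = j then 1 else 0) := by
  have hv : (σ ^ 2).toNNReal ≠ 0 := by simp [hσ.ne']
  have hvvw : (((σ ^ 2).toNNReal + (σ ^ 2).toNNReal + (l ^ 2).toNNReal : ℝ≥0) : ℝ)
      = l ^ 2 + 2 * σ ^ 2 := by
    simp only [NNReal.coe_add, Real.coe_toNNReal _ (sq_nonneg _)]
    ring
  simp_rw [gaussKernelMixedDeriv_add_right hl.ne']
  split_ifs with hij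
  · subst hij
    rw [integral_integral_gaussKernelMixedDeriv_self hv hl.ne', gaussianPDFReal_zero_pow, hvvw,
      mul_rpow (by positivity) (by positivity), rpow_sub_one (by positivity)]
    ring
  · rw [integral_integral_gaussKernelMixedDeriv_of_ne hv hl.ne' hij, mul_zero]
end

section
/- The function h(r) = 2 e^{-1/2} √(l² + σ²) ((l² + 2σ²)/(l² + σ²))^{d/2 + 1} equals the supremum over z ∈ R^d of the Euclidean norm of the influence function IF(z, P_θ) = 2 ((l²+2σ²)/(l²+σ²))^{d/2+1} exp(-||z-θ||²/(2(l²+σ²))) (z-θ). Moreover, as l → ∞, IF(z, P_θ) converges pointwise to 2(z - θ). -/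
/-!
Write `a = l² + σ²` and `c = 2((l²+2σ²)/a)^{d/2+1}`. Then `‖IF(z)‖ = c φ(‖z - θ‖)` with
`φ(r) = r e^{-r²/(2a)}`. Since `φ(r)² = a · y e^{-y}` for `y = r²/a` and `y e^{-y} ≤ e^{-1}`,
`φ ≤ √a e^{-1/2}`, with equality at `r = √a`; for `d ≥ 1` the norm `‖z - θ‖` takes every value
in `[0, ∞)`, so this maximum is the supremum. As `l → ∞`, the ratio and the exponential factor
of `IF` both tend to `1`.
-/

open Filter Finset

open Real Set Topology

theorem mul_exp_neg_sq_div_le {a : ℝ} (ha : 0 < a) (r : ℝ) :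
    r * exp (-r ^ 2 / (2 * a)) ≤ √a * exp (-1 / 2) := by
  have hsq : (r * exp (-r ^ 2 / (2 * a))) ^ 2 ≤ (√a * exp (-1 / 2)) ^ 2 :=
    calc (r * exp (-r ^ 2 / (2 * a))) ^ 2 = a * (r ^ 2 / a * exp (-(r ^ 2 / a))) := by
          rw [mul_pow, ← exp_nat_mul]
          field_simp
          ring_nf
      _ ≤ a * exp (-1) := mul_le_mul_of_nonneg_left (mul_exp_neg_le_exp_neg_one _) ha.le
      _ = (√a * exp (-1 / 2)) ^ 2 := by
          rw [mul_pow, sq_sqrt ha.le, ← exp_nat_mul]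
          norm_num
  exact (le_abs_self _).trans (abs_le_of_sq_le_sq hsq (by positivity))

theorem isGreatest_image_mul_exp_neg_sq_div {a : ℝ} (ha : 0 < a) :
    IsGreatest ((fun r => r * exp (-r ^ 2 / (2 * a))) '' Set.Ici 0) (√a * exp (-1 / 2)) := by
  refine ⟨⟨√a, sqrt_nonneg a, ?_⟩, ?_⟩
  · show √a * exp (-√a ^ 2 / (2 * a)) = _
    rw [sq_sqrt ha.le, neg_div, div_mul_cancel_right₀ ha.ne']
    norm_num
  · rintro _ ⟨r, -, rfl⟩
    exact mul_exp_neg_sq_div_le ha r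

theorem range_sqrt_sum_sq_sub {ι : Type*} [Fintype ι] [Nonempty ι] (θ : ι → ℝ) :
    range (fun z : ι → ℝ => √(∑ j, (z j - θ j) ^ 2)) = Set.Ici 0 := by
  classical
  refine Subset.antisymm (range_subset_iff.2 fun _ => sqrt_nonneg _) fun r (hr : 0 ≤ r) => ?_
  obtain ⟨i⟩ := ‹Nonempty ι›
  refine ⟨θ + Pi.single i r, ?_⟩
  have : ∀ j, ((θ + Pi.single i r : ι → ℝ) j - θ j) ^ 2 = (Pi.single i (r ^ 2) : ι → ℝ) j := by
    intro j
    rcases eq_or_ne j i with rfl | h <;> simp [*]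
  simp only [this, sum_pi_single', Finset.mem_univ, if_true, sqrt_sq hr]

theorem sqrt_sum_mul_sq {ι : Type*} [Fintype ι] {c : ℝ} (hc : 0 ≤ c) (v : ι → ℝ) :
    √(∑ i, (c * v i) ^ 2) = c * √(∑ i, v i ^ 2) := by
  simp_rw [mul_pow, ← mul_sum, sqrt_mul (sq_nonneg c), sqrt_sq hc]

theorem tendsto_sq_add_const_atTop (c : ℝ) : Tendsto (fun x : ℝ => x ^ 2 + c) atTop atTop :=
  tendsto_atTop_add_const_right _ c (tendsto_pow_atTop two_ne_zero)

theorem tendsto_sq_add_div_sq_add_atTop (b c : ℝ) :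
    Tendsto (fun x : ℝ => (x ^ 2 + b) / (x ^ 2 + c)) atTop (𝓝 1) := by
  have h : Tendsto (fun x : ℝ => 1 + (b - c) / (x ^ 2 + c)) atTop (𝓝 (1 + 0)) :=
    tendsto_const_nhds.add (tendsto_const_nhds.div_atTop (tendsto_sq_add_const_atTop c))
  rw [add_zero] at h
  refine h.congr' ?_
  filter_upwards [(tendsto_sq_add_const_atTop c).eventually_ne_atTop 0] with x hx
  field_simp
  ring

theorem gaussian_location_gross_error_sensitivity_general (d : ℕ) (hd : 1 ≤ d)
    (σ l : ℝ) (hσ : 0 < σ) (θ : Fin d → ℝ)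
    (IF : ℝ → (Fin d → ℝ) → Fin d → ℝ)
    (hIF : ∀ (l' : ℝ) (z : Fin d → ℝ) (i : Fin d),
      IF l' z i = 2 * ((l' ^ 2 + 2 * σ ^ 2) / (l' ^ 2 + σ ^ 2)) ^ ((d : ℝ) / 2 + 1)
        * Real.exp (-(∑ j, (z j - θ j) ^ 2) / (2 * (l' ^ 2 + σ ^ 2)))
        * (z i - θ i)) :
    IsLUB (Set.range fun z : Fin d → ℝ => Real.sqrt (∑ i, (IF l z i) ^ 2))
        (2 * Real.exp (-(1 : ℝ) / 2) * Real.sqrt (l ^ 2 + σ ^ 2)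
          * ((l ^ 2 + 2 * σ ^ 2) / (l ^ 2 + σ ^ 2)) ^ ((d : ℝ) / 2 + 1))
    ∧ ∀ (z : Fin d → ℝ) (i : Fin d),
        Tendsto (fun l' => IF l' z i) atTop (nhds (2 * (z i - θ i))) := by
  refine ⟨?_, fun z i => ?_⟩
  · have : Nonempty (Fin d) := ⟨⟨0, hd⟩⟩
    set a := l ^ 2 + σ ^ 2
    set c := 2 * ((l ^ 2 + 2 * σ ^ 2) / a) ^ ((d : ℝ) / 2 + 1)
    have hc : 0 ≤ c := by positivity
    have hnorm : (fun z => √(∑ i, IF l z i ^ 2)) =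
        (c * ·) ∘ (fun r => r * exp (-r ^ 2 / (2 * a))) ∘ fun z => √(∑ j, (z j - θ j) ^ 2) := by
      funext z
      simp only [Function.comp, hIF, ← mul_assoc]
      rw [sqrt_sum_mul_sq (by positivity), sq_sqrt (by positivity)]
      ring
    have hmax := (monotone_mul_left_of_nonneg hc).map_isGreatest
      (isGreatest_image_mul_exp_neg_sq_div (a := a) (by positivity))
    rw [hnorm, range_comp, range_comp, range_sqrt_sum_sq_sub θ]
    have hvalue : 2 * exp (-1 / 2) * √a * ((l ^ 2 + 2 * σ ^ 2) / a) ^ ((d : ℝ) / 2 + 1) =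
        c * (√a * exp (-1 / 2)) := by
      ring
    rw [hvalue]
    exact hmax.isLUB
  · have hratio := (tendsto_sq_add_div_sq_add_atTop (2 * σ ^ 2) (σ ^ 2)).rpow_const
      (p := (d : ℝ) / 2 + 1) (Or.inl one_ne_zero)
    have hexp := tendsto_exp_nhds_zero_nhds_one.comp (tendsto_const_nhds.div_atTop
      ((tendsto_sq_add_const_atTop (σ ^ 2)).const_mul_atTop two_pos)
      (f := fun _ => -∑ j, (z j - θ j) ^ 2))
    simp_rw [hIF]
    simpa using ((tendsto_const_nhds (x := 2)).mul hratio).mul hexp |>.mul_const (z i - θ i)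

/-- Gross-error sensitivity of the minimum MMD estimator for the Gaussian
location model: the supremum over `z ∈ ℝᵈ` of the Euclidean norm of the
influence function
`IF(z,P_θ) = 2((l²+2σ²)/(l²+σ²))^{d/2+1} exp(−‖z−θ‖²/(2(l²+σ²)))(z−θ)`
equals `2e^{-1/2}√(l²+σ²)((l²+2σ²)/(l²+σ²))^{d/2+1}`; moreover as `l → ∞`,
`IF(z,P_θ)` converges pointwise to `2(z−θ)`. -/
theorem gaussian_location_gross_error_sensitivity (d : ℕ) (hd : 1 ≤ d)
    (σ l : ℝ) (hσ : 0 < σ) (hl : 0 < l) (θ : Fin d → ℝ)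
    (IF : ℝ → (Fin d → ℝ) → Fin d → ℝ)
    (hIF : ∀ (l' : ℝ) (z : Fin d → ℝ) (i : Fin d),
      IF l' z i = 2 * ((l' ^ 2 + 2 * σ ^ 2) / (l' ^ 2 + σ ^ 2)) ^ ((d : ℝ) / 2 + 1)
        * Real.exp (-(∑ j, (z j - θ j) ^ 2) / (2 * (l' ^ 2 + σ ^ 2)))
        * (z i - θ i)) :
    IsLUB (Set.range fun z : Fin d → ℝ => Real.sqrt (∑ i, (IF l z i) ^ 2))
        (2 * Real.exp (-(1 : ℝ) / 2) * Real.sqrt (l ^ 2 + σ ^ 2)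
          * ((l ^ 2 + 2 * σ ^ 2) / (l ^ 2 + σ ^ 2)) ^ ((d : ℝ) / 2 + 1))
    ∧ ∀ (z : Fin d → ℝ) (i : Fin d),
        Tendsto (fun l' => IF l' z i) atTop (nhds (2 * (z i - θ i))) :=
  gaussian_location_gross_error_sensitivity_general d hd σ l hσ θ IF hIF
end

section
/- Define E(d) = ((1 + 4s d^{-2α} + 3s² d^{-4α}) / (1 + 4s d^{-2α} + 4s² d^{-4α}))^{-d/2} for fixed s > 0 and α > 0. Then as d → ∞: E(d) → 1 if α > 1/4, E(d) → e^{s²/2} if α = 1/4, and E(d) → +∞ if α < 1/4. -/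
/-!
Writing `t = d^{-2α}`, the base of the power is `1 - (st)² / (1 + 2st)²`, and since
`log y ~ y - 1` as `y → 1`, the exponent `-(d/2) log(…)` is asymptotically equivalent to
`(s²/2) d^{1-4α} / (1 + 2st)²`. As `t → 0`, this tends to `0`, `s²/2` or `+∞` according to the
sign of `1 - 4α`.
-/

open Filter Topology Asymptotics Real

theorem Real.isEquivalent_log_sub_one : log ~[𝓝 1] fun y => y - 1 := by
  simpa [IsEquivalent, Pi.sub_def] using (hasDerivAt_log one_ne_zero).isLittleO

theorem tendsto_natCast_rpow_neg_atTop {y : ℝ} (hy : 0 < y) :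
    Tendsto (fun n : ℕ => (n : ℝ) ^ (-y)) atTop (𝓝 0) :=
  (tendsto_rpow_neg_atTop hy).comp tendsto_natCast_atTop_atTop

noncomputable def gaussianScaleRatio (s t : ℝ) : ℝ :=
  (1 + 4 * s * t + 3 * s ^ 2 * t ^ 2) / (1 + 4 * s * t + 4 * s ^ 2 * t ^ 2)

section GaussianScaleRatio

variable {s t : ℝ}

theorem gaussianScaleRatio_pos (hs : 0 ≤ s) (ht : 0 ≤ t) : 0 < gaussianScaleRatio s t := by
  unfold gaussianScaleRatio
  positivity

theorem gaussianScaleRatio_sub_one (h : 1 + 2 * s * t ≠ 0) :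
    gaussianScaleRatio s t - 1 = -(s * t) ^ 2 / (1 + 2 * s * t) ^ 2 := by
  have hden : 1 + 4 * s * t + 4 * s ^ 2 * t ^ 2 = (1 + 2 * s * t) ^ 2 := by ring
  rw [gaussianScaleRatio, hden, div_sub_one (pow_ne_zero 2 h)]
  ring

theorem tendsto_gaussianScaleRatio_zero (s : ℝ) :
    Tendsto (gaussianScaleRatio s) (𝓝 0) (𝓝 1) := by
  have hcont : ContinuousAt (gaussianScaleRatio s) 0 := by
    unfold gaussianScaleRatio
    fun_prop (disch := norm_num)
  simpa [gaussianScaleRatio] using hcont.tendsto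

end GaussianScaleRatio

theorem isEquivalent_log_gaussianScaleRatio_mul {s α : ℝ} (hs : 0 ≤ s) (hα : 0 < α) :
    (fun d : ℕ => log (gaussianScaleRatio s ((d : ℝ) ^ (-(2 * α)))) * (-(d : ℝ) / 2)) ~[atTop]
      fun d => s ^ 2 / 2 * (d : ℝ) ^ (1 - 4 * α) / (1 + 2 * s * (d : ℝ) ^ (-(2 * α))) ^ 2 := by
  have hratio := (tendsto_gaussianScaleRatio_zero s).comp
    (tendsto_natCast_rpow_neg_atTop (by positivity : 0 < 2 * α))
  refine ((isEquivalent_log_sub_one.comp_tendsto hratio).mul IsEquivalent.refl).congr_right ?_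
  filter_upwards [eventually_gt_atTop 0] with d hd
  have hd : (0 : ℝ) < d := by exact_mod_cast hd
  have hpow : (d : ℝ) ^ (1 - 4 * α) = d * ((d : ℝ) ^ (-(2 * α))) ^ 2 := by
    rw [sub_eq_add_neg, rpow_add hd, rpow_one, ← rpow_natCast, ← rpow_mul hd.le]
    ring_nf
  simp only [Pi.mul_apply, Function.comp_apply]
  rw [gaussianScaleRatio_sub_one (by positivity), hpow]
  ring

/-- Critical scaling limits for the Gaussian scale model: with
`E(d) = ((1 + 4s d^{-2α} + 3s² d^{-4α})/(1 + 4s d^{-2α} + 4s² d^{-4α}))^{-d/2}`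
for fixed `s > 0` and `α > 0`, as `d → ∞`: `E(d) → 1` if `α > 1/4`,
`E(d) → e^{s²/2}` if `α = 1/4`, and `E(d) → +∞` if `α < 1/4`. -/
theorem gaussian_scale_critical_scaling (s α : ℝ) (hs : 0 < s) (hα : 0 < α)
    (E : ℕ → ℝ)
    (hE : ∀ d : ℕ, E d =
        ((1 + 4 * s * (d : ℝ) ^ (-(2 * α)) + 3 * s ^ 2 * (d : ℝ) ^ (-(4 * α))) /
         (1 + 4 * s * (d : ℝ) ^ (-(2 * α)) + 4 * s ^ 2 * (d : ℝ) ^ (-(4 * α))))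
          ^ (-(d : ℝ) / 2)) :
    (α > 1 / 4 → Tendsto E atTop (nhds 1))
    ∧ (α = 1 / 4 → Tendsto E atTop (nhds (Real.exp (s ^ 2 / 2))))
    ∧ (α < 1 / 4 → Tendsto E atTop atTop) := by
  have hE_exp : E = fun d : ℕ =>
      exp (log (gaussianScaleRatio s ((d : ℝ) ^ (-(2 * α)))) * (-(d : ℝ) / 2)) := by
    funext d
    have hsq : (d : ℝ) ^ (-(4 * α)) = ((d : ℝ) ^ (-(2 * α))) ^ 2 := by
      rw [← rpow_natCast, ← rpow_mul d.cast_nonneg]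
      ring_nf
    rw [hE, hsq, ← rpow_def_of_pos (gaussianScaleRatio_pos hs.le (by positivity))]
    rfl
  have hequiv := (isEquivalent_log_gaussianScaleRatio_mul hs.le hα).symm
  simp only [div_eq_mul_inv (s ^ 2 / 2 * _)] at hequiv
  have hden : Tendsto (fun d : ℕ => ((1 + 2 * s * (d : ℝ) ^ (-(2 * α))) ^ 2)⁻¹) atTop (𝓝 1) := by
    simpa using ((((tendsto_natCast_rpow_neg_atTop (by positivity : 0 < 2 * α)).const_mul
      (2 * s)).const_add 1).pow 2).inv₀ (by norm_num)
  rw [hE_exp]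
  refine ⟨fun h => ?_, fun h => ?_, fun h => ?_⟩
  · have hr : Tendsto (fun d : ℕ => (d : ℝ) ^ (1 - 4 * α)) atTop (𝓝 0) := by
      simpa only [neg_sub] using tendsto_natCast_rpow_neg_atTop (by linarith : 0 < 4 * α - 1)
    rw [← exp_zero]
    exact (hequiv.tendsto_nhds (by simpa using (hr.const_mul (s ^ 2 / 2)).mul hden)).rexp
  · subst h
    exact (hequiv.tendsto_nhds (by simpa using hden.const_mul (s ^ 2 / 2))).rexp
  · have hr : Tendsto (fun d : ℕ => (d : ℝ) ^ (1 - 4 * α)) atTop atTop :=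
      (tendsto_rpow_atTop (by linarith)).comp tendsto_natCast_atTop_atTop
    exact tendsto_exp_atTop.comp (hequiv.tendsto_atTop
      ((hr.const_mul_atTop (by positivity)).atTop_mul_pos one_pos hden))
end
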